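/- On the full isoradial graph with critical weights, the constant function f ≡ 1 satisfies T(Sf) = 0 identically; hence the critical Kac-Ward operator on the full graph has nontrivial kernel and is not invertible as a linear map on ℂ^{directed edges}. -/

import Mathlib

open Complex

noncomputable section

attribute [local instance] Classical.propDecidable

/-- Reversal of a directed edge. -/
def rev (e : ℂ × ℂ) : ℂ × ℂ := (e.2, e.1)

/-- The undirected edge underlying a directed edge. -/
def ue (e : ℂ × ℂ) : Sym2 ℂ := s(e.1, e.2)

/-- The turning angle `∠(e, g) ∈ (-π, π]`. -/
def ang (e g : ℂ × ℂ) : ℝ := Complex.arg ((g.2 - g.1) / (e.2 - e.1))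

/-- The counterclockwise angle from `e` to `g`, in `(0, 2π]`. -/
def ccw (e g : ℂ × ℂ) : ℝ := if 0 < ang e g then ang e g else ang e g + 2 * Real.pi

/-- `e₁` and `e₂` are consecutive (in counterclockwise order) directed edges of `D`
pointing at the vertex `z`: no other edge of `D` pointing at `z` lies strictly between
them counterclockwise. -/
def ConsecIn (D : Set (ℂ × ℂ)) (z : ℂ) (e₁ e₂ : ℂ × ℂ) : Prop :=
  e₁ ∈ D ∧ e₂ ∈ D ∧ e₁.2 = z ∧ e₂.2 = z ∧ e₁ ≠ e₂ ∧
  ∀ g ∈ D, g.2 = z → g ≠ e₁ → g ≠ e₂ → ccw (rev e₁) (rev e₂) ≤ ccw (rev e₁) (rev g)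

/-- An isoradial graph, presented by its symmetric set of directed edges together with
the rhombus half-angles `θ_e ∈ (0, π)` of its edges.  The fields `angleSum`,
`consecAngle` and `angAdd` record the basic geometric properties of a rhombic (isoradial)
embedding: the angles `θ` sum to `π` around every vertex, the turning angle between
consecutive incoming edges at a vertex is `θ_{e₁} + θ_{e₂}`, and turning angles at a
vertex are additive. -/
structure Isoradial where
  D : Set (ℂ × ℂ)
  θ : Sym2 ℂ → ℝ
  nd : ∀ e ∈ D, e.1 ≠ e.2
  symm : ∀ e ∈ D, rev e ∈ D
  finOut : ∀ z : ℂ, {g ∈ D | g.1 = z}.Finite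
  θpos : ∀ e ∈ D, 0 < θ (ue e)
  θlt : ∀ e ∈ D, θ (ue e) < Real.pi
  angleSum : ∀ z : ℂ, {g ∈ D | g.1 = z}.Nonempty →
    ∑ g ∈ (finOut z).toFinset, θ (ue g) = Real.pi
  consecAngle : ∀ z e₁ e₂, ConsecIn D z e₁ e₂ → ang e₁ e₂ = θ (ue e₁) + θ (ue e₂)
  angAdd : ∀ z e₁ e₂ g, ConsecIn D z e₁ e₂ → g ∈ D → g.1 = z →
    g ≠ rev e₁ → g ≠ rev e₂ → ang e₁ e₂ + ang e₂ g = ang e₁ g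

/-- The Kac-Ward operator `T = Id - Λ` acting on functions of directed edges (the
transition sum is taken at directed edges of the graph, and `T` acts as the identity on
the orthogonal complement, i.e. away from the graph). -/
def KWop (Γ : Isoradial) (x : Sym2 ℂ → ℝ) (φ : (ℂ × ℂ) → ℂ) (e : ℂ × ℂ) : ℂ :=
  φ e - if e ∈ Γ.D then
    ∑ g ∈ (Γ.finOut e.2).toFinset,
      if g ≠ rev e then (x (ue e) : ℂ) * Complex.exp (Complex.I * (ang e g : ℂ) / 2) * φ g
      else 0
  else 0

/-- The critical weight system `x_e = tan(θ_e/2)`. -/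
def critX (Γ : Isoradial) : Sym2 ℂ → ℝ := fun t => Real.tan (Γ.θ t / 2)

/-- The unit complex number `exp(-i ∠(e)/2)` spanning the line `ℓ_e`. -/
def dirL (e : ℂ × ℂ) : ℂ := Complex.exp (-Complex.I * (Complex.arg (e.2 - e.1) : ℂ) / 2)

/-- The line `ℓ_e = exp(-i ∠(e)/2) ℝ ⊆ ℂ`. -/
def lineOf (e : ℂ × ℂ) : Set ℂ := {c : ℂ | ∃ r : ℝ, c = dirL e * (r : ℂ)}

/-- Orthogonal projection of `w` onto the line `u·ℝ`. -/
def projL (u w : ℂ) : ℂ := (((w * (starRingEnd ℂ u)).re / Complex.normSq u : ℝ) : ℂ) * u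

/-- The operator `S`: `(Sf)(e) = sin(θ_e/2)·Proj(f(e); ℓ_e)`,
mapping functions of undirected edges to elements of `L = ∏_e ℓ_e`. -/
def Sproj (Γ : Isoradial) (f : Sym2 ℂ → ℂ) (e : ℂ × ℂ) : ℂ :=
  ((Real.sin (Γ.θ (ue e) / 2) : ℝ) : ℂ) * projL (dirL e) (f (ue e))

/-- A unit vector spanning the line `(z - z*)^{-1/2} ℝ = exp(-iθ_{e₁}/2) ℓ_{e₁}` of the
face shared by a pair of consecutive incoming edges `e₁, e₂` at `z` (here `z*` is the
circumcenter of that face). -/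
def faceDir (Γ : Isoradial) (e₁ : ℂ × ℂ) : ℂ :=
  Complex.exp (-Complex.I * (Γ.θ (ue e₁) : ℂ) / 2) * dirL e₁

/-- `f` is s-holomorphic at `z`: for every face incident to `z` (equivalently, every pair
of consecutive incoming edges `e₁, e₂` at `z`), the projections of `f(e₁)` and `f(e₂)`
onto the line `(z - z*)^{-1/2} ℝ` of the face coincide. -/
def SHolAt (Γ : Isoradial) (f : Sym2 ℂ → ℂ) (z : ℂ) : Prop :=
  ∀ e₁ e₂ : ℂ × ℂ, ConsecIn Γ.D z e₁ e₂ →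
    projL (faceDir Γ e₁) (f (ue e₁)) = projL (faceDir Γ e₁) (f (ue e₂))

/-!
With `u_e` the unit vector along `e`, `S1(e) = sin(θ_e/2) (1 + ū_e)/2`, and `T(S1)(e) = 0` reduces
to the identity `∑_h sin(θ_h/2) exp(i∠(e, h̄)/2) = cos(θ_e/2)` (and its conjugate), the sum
running over the other edges `h` pointing at the head of `e`, `h̄` being `h` reversed. Ordering
these edges counterclockwise from `e`, the isoradial axioms give
`∠(e, h̄) = θ_e + 2 ∑_{g strictly between e and h} θ_g + θ_h - π`, which makes the sum
telescope, because the `θ`s around a vertex add up to `π`. Restricted to the edges of the graph,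
`S1` is then a nonzero kernel vector.
-/

open scoped Real

theorem eq_of_exp_mul_I_eq_of_abs_sub_lt {x y : ℝ} (h : exp (x * I) = exp (y * I))
    (hxy : |x - y| < 2 * π) : x = y := by
  obtain ⟨n, hn⟩ := Circle.exp_eq_exp.1 (Subtype.ext h)
  rw [hn, add_sub_cancel_left, abs_mul, abs_of_pos Real.two_pi_pos] at hxy
  have : n = 0 :=
    Int.abs_lt_one_iff.1 (by exact_mod_cast (mul_lt_iff_lt_one_left Real.two_pi_pos).1 hxy)
  simp [hn, this]

theorem exp_arg_mul_I {z : ℂ} (hz : z ≠ 0) : exp (Complex.arg z * I) = z / (‖z‖ : ℂ) := by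
  rw [eq_div_iff (by simpa using hz), mul_comm, Complex.norm_mul_exp_arg_mul_I]

theorem rev_rev (e : ℂ × ℂ) : rev (rev e) = e := rfl

theorem rev_injective : Function.Injective rev := fun a b h => by
  simpa [rev, Prod.ext_iff, and_comm] using h

theorem ue_rev (g : ℂ × ℂ) : ue (rev g) = ue g := Sym2.eq_swap

theorem neg_pi_lt_ang (e g : ℂ × ℂ) : -π < ang e g := Complex.neg_pi_lt_arg _

theorem ang_le_pi (e g : ℂ × ℂ) : ang e g ≤ π := Complex.arg_le_pi _

theorem ang_self (e : ℂ × ℂ) : ang e e = 0 := by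
  by_cases h : e.2 - e.1 = 0 <;> simp [ang, h]

theorem ang_eq_of_exp_eq {e g : ℂ × ℂ} {a : ℝ} (h : exp (ang e g * I) = exp (a * I))
    (h₁ : -π < a) (h₂ : a ≤ π) : ang e g = a :=
  eq_of_exp_mul_I_eq_of_abs_sub_lt h
    (abs_lt.2 ⟨by linarith [neg_pi_lt_ang e g], by linarith [ang_le_pi e g]⟩)

theorem ang_rev_rev (e g : ℂ × ℂ) : ang (rev e) (rev g) = ang e g := by
  simp only [ang, rev, ← neg_sub (g.2), ← neg_sub (e.2), neg_div_neg_eq]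

theorem exp_ang_rev_right_mul_I {e g : ℂ × ℂ} (he : e.2 - e.1 ≠ 0) (hg : g.2 - g.1 ≠ 0) :
    exp (ang e (rev g) * I) = -exp (ang e g * I) := by
  have hw : (g.2 - g.1) / (e.2 - e.1) ≠ 0 := div_ne_zero hg he
  simp only [ang, rev, ← neg_sub g.2, neg_div, exp_arg_mul_I hw, exp_arg_mul_I (neg_ne_zero.2 hw),
    norm_neg, neg_div]

theorem ang_rev_right {e g : ℂ × ℂ} (he : e.2 - e.1 ≠ 0) (hg : g.2 - g.1 ≠ 0) :
    ang e (rev g) = if 0 < ang e g then ang e g - π else ang e g + π := by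
  have h₁ := neg_pi_lt_ang e g
  have h₂ := ang_le_pi e g
  split_ifs with h
  · refine ang_eq_of_exp_eq ?_ (by linarith) (by linarith)
    rw [exp_ang_rev_right_mul_I he hg, Complex.ofReal_sub, sub_mul, Complex.exp_sub_pi_mul_I]
  · refine ang_eq_of_exp_eq ?_ (by linarith) (by linarith)
    rw [exp_ang_rev_right_mul_I he hg, Complex.ofReal_add, add_mul, Complex.exp_add_pi_mul_I]

theorem ang_swap_of_eq_zero {e g : ℂ × ℂ} (h : ang e g = 0) : ang g e = 0 := by
  rw [ang, ← inv_div, Complex.arg_inv, if_neg] <;> simp_all [ang, Real.pi_ne_zero.symm]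

theorem ccw_pos (e g : ℂ × ℂ) : 0 < ccw e g := by
  unfold ccw
  split_ifs with h
  · exact h
  · linarith [neg_pi_lt_ang e g, Real.pi_pos]

theorem ccw_le_two_pi (e g : ℂ × ℂ) : ccw e g ≤ 2 * π := by
  unfold ccw
  split_ifs with h
  · linarith [ang_le_pi e g, Real.pi_pos]
  · linarith [not_lt.1 h]

theorem ccw_self (e : ℂ × ℂ) : ccw e e = 2 * π := by
  simp [ccw, ang_self]

theorem exp_ccw_mul_I (e g : ℂ × ℂ) : exp (ccw e g * I) = exp (ang e g * I) := by
  unfold ccw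
  split_ifs
  · rfl
  · push_cast
    rw [add_mul, Complex.exp_add, Complex.exp_two_pi_mul_I, mul_one]

theorem ccw_eq_of_exp_eq {e g : ℂ × ℂ} {a : ℝ} (h : exp (ccw e g * I) = exp (a * I))
    (h₁ : 0 < a) (h₂ : a ≤ 2 * π) : ccw e g = a :=
  eq_of_exp_mul_I_eq_of_abs_sub_lt h
    (abs_lt.2 ⟨by linarith [ccw_pos e g], by linarith [ccw_le_two_pi e g]⟩)

def unitDir (e : ℂ × ℂ) : ℂ := exp (Complex.arg (e.2 - e.1) * I)

theorem unitDir_ne_zero (e : ℂ × ℂ) : unitDir e ≠ 0 := Complex.exp_ne_zero _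

theorem unitDir_rev {e : ℂ × ℂ} (he : e.2 - e.1 ≠ 0) : unitDir (rev e) = -unitDir e := by
  have hrev : (rev e).2 - (rev e).1 = -(e.2 - e.1) := by simp [rev]
  rw [unitDir, unitDir, hrev, exp_arg_mul_I (neg_ne_zero.2 he), exp_arg_mul_I he, norm_neg, neg_div]

theorem exp_ang_mul_I {e g : ℂ × ℂ} (he : e.2 - e.1 ≠ 0) (hg : g.2 - g.1 ≠ 0) :
    exp (ang e g * I) = unitDir g / unitDir e := by
  rw [ang, unitDir, unitDir, exp_arg_mul_I (div_ne_zero hg he), exp_arg_mul_I hg,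
    exp_arg_mul_I he, norm_div]
  push_cast
  field_simp

theorem exp_ccw_sub_ccw {a b c : ℂ × ℂ} (ha : a.2 - a.1 ≠ 0) (hb : b.2 - b.1 ≠ 0)
    (hc : c.2 - c.1 ≠ 0) : exp ((ccw a c - ccw a b : ℝ) * I) = exp (ccw b c * I) := by
  rw [Complex.ofReal_sub, sub_mul, Complex.exp_sub]
  simp only [exp_ccw_mul_I, exp_ang_mul_I ha hb, exp_ang_mul_I ha hc, exp_ang_mul_I hb hc]
  field_simp [unitDir_ne_zero]

theorem ccw_eq_sub_of_lt {a b c : ℂ × ℂ} (ha : a.2 - a.1 ≠ 0) (hb : b.2 - b.1 ≠ 0)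
    (hc : c.2 - c.1 ≠ 0) (h : ccw a b < ccw a c) : ccw b c = ccw a c - ccw a b :=
  ccw_eq_of_exp_eq (exp_ccw_sub_ccw ha hb hc).symm (by linarith)
    (by linarith [ccw_le_two_pi a c, ccw_pos a b])

theorem ccw_eq_sub_add_of_lt {a b c : ℂ × ℂ} (ha : a.2 - a.1 ≠ 0) (hb : b.2 - b.1 ≠ 0)
    (hc : c.2 - c.1 ≠ 0) (h : ccw a c < ccw a b) :
    ccw b c = ccw a c - ccw a b + 2 * π := by
  refine ccw_eq_of_exp_eq ?_ (by linarith [ccw_le_two_pi a b, ccw_pos a c]) (by linarith)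
  rw [Complex.ofReal_add, add_mul, Complex.exp_add, exp_ccw_sub_ccw ha hb hc]
  push_cast
  rw [Complex.exp_two_pi_mul_I, mul_one]

/-- `ccw` would put `e` itself last, at `2π`; here it comes first, at `0`. -/
def cyclicPos (e f : ℂ × ℂ) : ℝ := if f = e then 0 else ccw (rev e) (rev f)

theorem cyclicPos_self (e : ℂ × ℂ) : cyclicPos e e = 0 := if_pos rfl

theorem cyclicPos_of_ne {e f : ℂ × ℂ} (h : f ≠ e) : cyclicPos e f = ccw (rev e) (rev f) :=
  if_neg h

theorem cyclicPos_pos {e f : ℂ × ℂ} (h : f ≠ e) : 0 < cyclicPos e f := by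
  rw [cyclicPos_of_ne h]
  exact ccw_pos _ _

theorem cyclicPos_nonneg (e f : ℂ × ℂ) : 0 ≤ cyclicPos e f := by
  rcases eq_or_ne f e with rfl | h
  · rw [cyclicPos_self]
  · exact (cyclicPos_pos h).le

theorem Finset.sum_telescope_partialSums {ι α β M : Type*} [DecidableEq ι] [LinearOrder α]
    [AddCommMonoid β] [AddCommGroup M] (k : ι → α) (w : ι → β) (F : β → M) (s : Finset ι)
    (hk : Set.InjOn k s) :
    ∑ i ∈ s, (F (∑ j ∈ s with k j < k i, w j + w i) - F (∑ j ∈ s with k j < k i, w j)) =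
      F (∑ j ∈ s, w j) - F 0 := by
  induction s using Finset.induction_on_max_value k with
  | empty => simp
  | insert a s ha hmax ih =>
    have hfilter : ∀ i ∈ s, {j ∈ insert a s | k j < k i} = {j ∈ s | k j < k i} := fun i hi => by
      rw [Finset.filter_insert, if_neg (not_lt.2 (hmax i hi))]
    have hfilter_a : {j ∈ insert a s | k j < k a} = s := by
      rw [Finset.filter_insert, if_neg (lt_irrefl _), Finset.filter_true_of_mem]
      refine fun i hi => (hmax i hi).lt_of_ne fun heq => ha ?_
      rwa [← hk (Finset.mem_insert_of_mem hi) (Finset.mem_insert_self a s) heq]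
    have hrest : ∑ i ∈ s, (F (∑ j ∈ insert a s with k j < k i, w j + w i) -
        F (∑ j ∈ insert a s with k j < k i, w j)) = F (∑ j ∈ s, w j) - F 0 := by
      rw [← ih (hk.mono (by simp))]
      exact Finset.sum_congr rfl fun i hi => by rw [hfilter i hi]
    rw [Finset.sum_insert ha, hfilter_a, hrest, Finset.sum_insert ha, add_comm (w a)]
    abel

theorem sin_half_mul_exp_add_half (t c q : ℝ) :
    (Real.sin (t / 2) : ℂ) * exp ((c + q + t / 2 : ℝ) * I) =
      -I / 2 * exp (c * I) * (exp ((q + t : ℝ) * I) - exp (q * I)) := by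
  have ht : ((q + t : ℝ) : ℂ) * I = q * I + (t / 2 : ℝ) * I + (t / 2 : ℝ) * I := by
    push_cast; ring
  rw [Complex.ofReal_sin, Complex.sin, ht]
  simp only [Complex.ofReal_add, add_mul, Complex.exp_add, neg_mul, Complex.exp_neg]
  field_simp
  ring_nf

theorem neg_I_div_two_mul_exp_mul_exp_sub_one (a : ℝ) :
    -I / 2 * exp ((-a : ℝ) * I) * (exp ((2 * a : ℝ) * I) - 1) = Real.sin a := by
  have h2a : ((2 * a : ℝ) : ℂ) * I = a * I + a * I := by push_cast; ring
  rw [Complex.ofReal_sin, Complex.sin, h2a]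
  simp only [Complex.ofReal_neg, neg_mul, Complex.exp_add, Complex.exp_neg]
  field_simp
  ring_nf

theorem projL_one {u : ℂ} (hu : ‖u‖ = 1) : projL u 1 = (1 + u ^ 2) / 2 := by
  have hnormSq : Complex.normSq u = 1 := by rw [Complex.normSq_eq_norm_sq, hu, one_pow]
  have hconj : u * (starRingEnd ℂ) u = 1 := by rw [Complex.mul_conj, hnormSq, Complex.ofReal_one]
  rw [projL, one_mul, hnormSq, div_one, Complex.conj_re, Complex.re_eq_add_conj]
  linear_combination hconj / 2

theorem dirL_sq (e : ℂ × ℂ) : dirL e ^ 2 = (unitDir e)⁻¹ := by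
  rw [dirL, unitDir, ← Complex.exp_nat_mul, ← Complex.exp_neg]
  ring_nf

theorem norm_dirL (e : ℂ × ℂ) : ‖dirL e‖ = 1 := by
  rw [dirL, show -I * (Complex.arg (e.2 - e.1) : ℂ) / 2 =
    ((-Complex.arg (e.2 - e.1) / 2 : ℝ) : ℂ) * I by push_cast; ring, Complex.norm_exp_ofReal_mul_I]

namespace Isoradial

def incoming (Γ : Isoradial) (z : ℂ) : Finset (ℂ × ℂ) := (Γ.finOut z).toFinset.image rev

variable {Γ : Isoradial}

theorem mem_incoming {z : ℂ} {f : ℂ × ℂ} : f ∈ Γ.incoming z ↔ f ∈ Γ.D ∧ f.2 = z := by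
  simp only [incoming, Finset.mem_image, Set.Finite.mem_toFinset, Set.mem_ofPred_eq]
  constructor
  · rintro ⟨g, ⟨hg, rfl⟩, rfl⟩
    exact ⟨Γ.symm g hg, rfl⟩
  · rintro ⟨hf, rfl⟩
    exact ⟨rev f, ⟨Γ.symm f hf, rfl⟩, rfl⟩

theorem sub_ne_zero_of_mem {f : ℂ × ℂ} (hf : f ∈ Γ.D) : f.2 - f.1 ≠ 0 :=
  sub_ne_zero.2 (Γ.nd f hf).symm

theorem rev_sub_ne_zero_of_mem {f : ℂ × ℂ} (hf : f ∈ Γ.D) : (rev f).2 - (rev f).1 ≠ 0 :=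
  sub_ne_zero_of_mem (Γ.symm f hf)

theorem ang_pos_of_consecIn {z : ℂ} {e₁ e₂ : ℂ × ℂ} (h : ConsecIn Γ.D z e₁ e₂) : 0 < ang e₁ e₂ := by
  rw [Γ.consecAngle z e₁ e₂ h]
  linarith [Γ.θpos e₁ h.1, Γ.θpos e₂ h.2.1]

theorem exists_consecIn_of_mem_incoming {z : ℂ} {g : ℂ × ℂ} (hg : g ∈ Γ.incoming z)
    (hne : ((Γ.incoming z).erase g).Nonempty) : ∃ p, ConsecIn Γ.D z p g := by
  obtain ⟨p, hp, hmin⟩ :=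
    Finset.exists_min_image ((Γ.incoming z).erase g) (fun f => ccw (rev f) (rev g)) hne
  obtain ⟨hpg, hp⟩ := Finset.mem_erase.1 hp
  obtain ⟨hpD, hpz⟩ := mem_incoming.1 hp
  obtain ⟨hgD, hgz⟩ := mem_incoming.1 hg
  refine ⟨p, hpD, hgD, hpz, hgz, hpg, fun h hhD hhz hhp hhg => not_lt.1 fun hlt => ?_⟩
  have := ccw_eq_sub_of_lt (rev_sub_ne_zero_of_mem hpD) (rev_sub_ne_zero_of_mem hhD)
    (rev_sub_ne_zero_of_mem hgD) hlt
  have := hmin h (Finset.mem_erase.2 ⟨hhg, mem_incoming.2 ⟨hhD, hhz⟩⟩)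
  linarith [ccw_pos (rev p) (rev h)]

/-- If `g₁ ∥ g₂`, the predecessor `p` of `g₁` would have `ang p (rev g₂) = θ_p + θ_{g₁} + π > π`. -/
theorem ang_ne_zero_of_mem_incoming {z : ℂ} {g₁ g₂ : ℂ × ℂ} (h₁ : g₁ ∈ Γ.incoming z)
    (h₂ : g₂ ∈ Γ.incoming z) (hne : g₁ ≠ g₂) : ang g₁ g₂ ≠ 0 := by
  intro h0
  obtain ⟨hD₁, hz₁⟩ := mem_incoming.1 h₁
  obtain ⟨hD₂, hz₂⟩ := mem_incoming.1 h₂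
  obtain ⟨p, hp⟩ := exists_consecIn_of_mem_incoming h₁ ⟨g₂, Finset.mem_erase.2 ⟨hne.symm, h₂⟩⟩
  have hpos := ang_pos_of_consecIn hp
  by_cases hpg : p = g₂
  · subst hpg
    linarith [ang_swap_of_eq_zero h0]
  · have hadd := Γ.angAdd z p g₁ (rev g₂) hp (Γ.symm g₂ hD₂) hz₂
      (fun h => hpg (rev_injective h).symm) (fun h => hne (rev_injective h).symm)
    rw [ang_rev_right (sub_ne_zero_of_mem hD₁) (sub_ne_zero_of_mem hD₂), h0, if_neg (lt_irrefl 0)]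
      at hadd
    linarith [ang_le_pi p (rev g₂)]

theorem cyclicPos_lt_two_pi {z : ℂ} {e f : ℂ × ℂ} (he : e ∈ Γ.incoming z)
    (hf : f ∈ Γ.incoming z) : cyclicPos e f < 2 * π := by
  rcases eq_or_ne f e with rfl | h
  · rw [cyclicPos_self]
    exact Real.two_pi_pos
  · rw [cyclicPos_of_ne h]
    refine (ccw_le_two_pi _ _).lt_of_ne fun h2π => ang_ne_zero_of_mem_incoming he hf h.symm ?_
    rw [ccw] at h2π
    split_ifs at h2π with hpos
    · linarith [ang_le_pi (rev e) (rev f)]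
    · rwa [add_eq_right, ang_rev_rev] at h2π

theorem cyclicPos_injOn {z : ℂ} {e : ℂ × ℂ} (he : e ∈ Γ.incoming z) :
    Set.InjOn (cyclicPos e) (Γ.incoming z) := by
  intro f hf g hg hfg
  by_contra hne
  rcases eq_or_ne f e with rfl | hfe
  · exact (cyclicPos_pos (Ne.symm hne)).ne' (hfg.symm.trans (cyclicPos_self f))
  rcases eq_or_ne g e with rfl | hge
  · exact (cyclicPos_pos hfe).ne' (hfg.trans (cyclicPos_self g))
  rw [cyclicPos_of_ne hfe, cyclicPos_of_ne hge] at hfg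
  have hD := fun {x} (hx : x ∈ Γ.incoming z) => rev_sub_ne_zero_of_mem (mem_incoming.1 hx).1
  have hexp := exp_ccw_sub_ccw (hD he) (hD hf) (hD hg)
  rw [hfg, sub_self, exp_ccw_mul_I, ang_rev_rev] at hexp
  exact ang_ne_zero_of_mem_incoming hf hg hne
    (ang_eq_of_exp_eq hexp.symm (by linarith [Real.pi_pos]) (by linarith [Real.pi_pos]))

theorem ccw_rev_rev_eq_ite {z : ℂ} {e f g : ℂ × ℂ} (he : e ∈ Γ.incoming z)
    (hf : f ∈ Γ.incoming z) (hg : g ∈ Γ.incoming z) (hfg : f ≠ g) :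
    ccw (rev f) (rev g) = if cyclicPos e f < cyclicPos e g then cyclicPos e g - cyclicPos e f
      else cyclicPos e g - cyclicPos e f + 2 * π := by
  have hD := fun {x} (hx : x ∈ Γ.incoming z) => rev_sub_ne_zero_of_mem (mem_incoming.1 hx).1
  rcases eq_or_ne f e with rfl | hfe
  · simp [cyclicPos_self, cyclicPos_of_ne hfg.symm, ccw_pos]
  rcases eq_or_ne g e with rfl | hge
  · have hlt := cyclicPos_lt_two_pi hg hf
    rw [cyclicPos_of_ne hfe] at hlt
    rw [cyclicPos_self, if_neg (cyclicPos_nonneg g f).not_gt, cyclicPos_of_ne hfe,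
      ccw_eq_sub_of_lt (hD hg) (hD hf) (hD hg) (by rwa [ccw_self]), ccw_self]
    ring
  rw [cyclicPos_of_ne hfe, cyclicPos_of_ne hge]
  split_ifs with h
  · exact ccw_eq_sub_of_lt (hD he) (hD hf) (hD hg) h
  · refine ccw_eq_sub_add_of_lt (hD he) (hD hf) (hD hg) ((not_lt.1 h).lt_of_ne fun heq => hfg ?_)
    refine cyclicPos_injOn he hf hg ?_
    rw [cyclicPos_of_ne hfe, cyclicPos_of_ne hge, heq]

theorem consecIn_of_cyclicPos_gap {z : ℂ} {e f g : ℂ × ℂ} (he : e ∈ Γ.incoming z)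
    (hf : f ∈ Γ.incoming z) (hg : g ∈ Γ.incoming z) (hfg : cyclicPos e f < cyclicPos e g)
    (hgap : ∀ h ∈ Γ.incoming z, cyclicPos e h ∉ Set.Ioo (cyclicPos e f) (cyclicPos e g)) :
    ConsecIn Γ.D z f g := by
  have hne : f ≠ g := by rintro rfl; exact lt_irrefl _ hfg
  obtain ⟨hfD, hfz⟩ := mem_incoming.1 hf
  obtain ⟨hgD, hgz⟩ := mem_incoming.1 hg
  refine ⟨hfD, hgD, hfz, hgz, hne, fun h hhD hhz hhf _ => ?_⟩
  have hh : h ∈ Γ.incoming z := mem_incoming.2 ⟨hhD, hhz⟩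
  rw [ccw_rev_rev_eq_ite he hf hg hne, if_pos hfg, ccw_rev_rev_eq_ite he hf hh hhf.symm]
  split_ifs with hfh
  · linarith [not_lt.1 fun hhg => hgap h hh ⟨hfh, hhg⟩]
  · linarith [cyclicPos_lt_two_pi he hg, cyclicPos_nonneg e h]

def between (Γ : Isoradial) (z : ℂ) (e f h : ℂ × ℂ) : Finset (ℂ × ℂ) :=
  (Γ.incoming z).filter fun g => cyclicPos e g ∈ Set.Ioo (cyclicPos e f) (cyclicPos e h)

theorem between_eq_erase_of_isMin {z : ℂ} {e f h s : ℂ × ℂ} (he : e ∈ Γ.incoming z)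
    (hs : s ∈ Γ.between z e f h) (hmin : ∀ g ∈ Γ.between z e f h, cyclicPos e s ≤ cyclicPos e g) :
    Γ.between z e s h = (Γ.between z e f h).erase s := by
  obtain ⟨hsz, hfs, -⟩ := Finset.mem_filter.1 hs
  ext g
  simp only [between, Finset.mem_erase, Finset.mem_filter, Set.mem_Ioo]
  constructor
  · rintro ⟨hg, hsg, hgh⟩
    exact ⟨by rintro rfl; exact lt_irrefl _ hsg, hg, hfs.trans hsg, hgh⟩
  · rintro ⟨hgs, hg, hfg, hgh⟩
    refine ⟨hg, (hmin g (Finset.mem_filter.2 ⟨hg, hfg, hgh⟩)).lt_of_ne fun heq => hgs ?_, hgh⟩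
    exact cyclicPos_injOn he hg hsz heq.symm

theorem ang_rev_eq_of_cyclicPos_lt {z : ℂ} {e f h : ℂ × ℂ} (he : e ∈ Γ.incoming z)
    (hf : f ∈ Γ.incoming z) (hh : h ∈ Γ.incoming z) (hfh : cyclicPos e f < cyclicPos e h) :
    ang f (rev h) = Γ.θ (ue f) + 2 * ∑ g ∈ Γ.between z e f h, Γ.θ (ue g) + Γ.θ (ue h) - π := by
  obtain ⟨n, hn⟩ : ∃ n, (Γ.between z e f h).card = n := ⟨_, rfl⟩
  have hhD := mem_incoming.1 hh
  induction n generalizing f with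
  | zero =>
    have hcons : ConsecIn Γ.D z f h := consecIn_of_cyclicPos_gap he hf hh hfh fun g hg hgap =>
      Finset.notMem_empty g (Finset.card_eq_zero.1 hn ▸ Finset.mem_filter.2 ⟨hg, hgap⟩)
    rw [ang_rev_right (sub_ne_zero_of_mem hcons.1) (sub_ne_zero_of_mem hhD.1),
      if_pos (ang_pos_of_consecIn hcons), Γ.consecAngle z f h hcons, Finset.card_eq_zero.1 hn]
    simp
  | succ n ih =>
    obtain ⟨s, hs, hmin⟩ := Finset.exists_min_image _ (cyclicPos e)
      (Finset.card_pos.1 (by rw [hn]; exact n.succ_pos))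
    obtain ⟨hsz, hfs, hsh⟩ := Finset.mem_filter.1 hs
    have hcons : ConsecIn Γ.D z f s := consecIn_of_cyclicPos_gap he hf hsz hfs fun g hg hgap =>
      not_lt.2 (hmin g (Finset.mem_filter.2 ⟨hg, hgap.1, hgap.2.trans hsh⟩)) hgap.2
    have herase := between_eq_erase_of_isMin he hs hmin
    have hsum := Finset.add_sum_erase _ (fun g => Γ.θ (ue g)) hs
    have hadd := Γ.angAdd z f s (rev h) hcons (Γ.symm h hhD.1) hhD.2
      (fun heq => hfh.ne' (congrArg (cyclicPos e) (rev_injective heq)))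
      (fun heq => hsh.ne' (congrArg (cyclicPos e) (rev_injective heq)))
    have hcard : (Γ.between z e s h).card = n := by
      rw [herase, Finset.card_erase_of_mem hs, hn, Nat.add_sub_cancel]
    rw [Γ.consecAngle z f s hcons, ih hsz hsh hcard, herase] at hadd
    linarith

theorem sum_θ_incoming {z : ℂ} (hz : (Γ.incoming z).Nonempty) :
    ∑ g ∈ Γ.incoming z, Γ.θ (ue g) = π := by
  obtain ⟨g, hg⟩ := hz
  rw [incoming, Finset.sum_image fun a _ b _ h => rev_injective h]
  simp only [ue_rev]
  exact Γ.angleSum z ⟨rev g, Γ.symm g (mem_incoming.1 hg).1, (mem_incoming.1 hg).2⟩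

theorem sum_sin_mul_exp_ang_half {e : ℂ × ℂ} (he : e ∈ Γ.D) :
    ∑ h ∈ (Γ.incoming e.2).erase e,
        (Real.sin (Γ.θ (ue h) / 2) : ℂ) * exp ((ang e (rev h) / 2 : ℝ) * I) =
      Real.cos (Γ.θ (ue e) / 2) := by
  have he' : e ∈ Γ.incoming e.2 := mem_incoming.2 ⟨he, rfl⟩
  set S := (Γ.incoming e.2).erase e
  set q : ℂ × ℂ → ℝ := fun h => ∑ g ∈ S with cyclicPos e g < cyclicPos e h, Γ.θ (ue g)
  have hang : ∀ h ∈ S, ang e (rev h) / 2 = (Γ.θ (ue e) - π) / 2 + q h + Γ.θ (ue h) / 2 := by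
    intro h hh
    obtain ⟨hhe, hh⟩ := Finset.mem_erase.1 hh
    have hbetween : Γ.between e.2 e e h = S.filter (cyclicPos e · < cyclicPos e h) := by
      ext g
      simp only [between, S, Finset.mem_filter, Finset.mem_erase, Set.mem_Ioo, cyclicPos_self]
      exact ⟨fun ⟨hg, hpos, hlt⟩ => ⟨⟨by rintro rfl; simp [cyclicPos_self] at hpos, hg⟩, hlt⟩,
        fun ⟨⟨hge, hg⟩, hlt⟩ => ⟨hg, cyclicPos_pos hge, hlt⟩⟩
    rw [ang_rev_eq_of_cyclicPos_lt he' he' hh (by rw [cyclicPos_self]; exact cyclicPos_pos hhe),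
      hbetween]
    ring
  have htotal : ∑ g ∈ S, Γ.θ (ue g) = π - Γ.θ (ue e) := by
    have := Finset.add_sum_erase _ (fun g => Γ.θ (ue g)) he'
    rw [sum_θ_incoming ⟨e, he'⟩] at this
    linarith
  calc ∑ h ∈ S, (Real.sin (Γ.θ (ue h) / 2) : ℂ) * exp ((ang e (rev h) / 2 : ℝ) * I)
      = ∑ h ∈ S, -I / 2 * exp (((Γ.θ (ue e) - π) / 2 : ℝ) * I) *
          (exp ((q h + Γ.θ (ue h) : ℝ) * I) - exp (q h * I)) :=
        Finset.sum_congr rfl fun h hh => by rw [hang h hh, sin_half_mul_exp_add_half]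
    _ = -I / 2 * exp ((-((π - Γ.θ (ue e)) / 2) : ℝ) * I) *
          (exp ((2 * ((π - Γ.θ (ue e)) / 2) : ℝ) * I) - 1) := by
        rw [← Finset.mul_sum, Finset.sum_telescope_partialSums (cyclicPos e) (fun g => Γ.θ (ue g))
          (fun x : ℝ => exp (x * I)) S ((cyclicPos_injOn he').mono (Finset.erase_subset _ _)),
          htotal]
        simp only [Complex.ofReal_zero, zero_mul, Complex.exp_zero]
        congr 3 <;> push_cast <;> ring
    _ = Real.cos (Γ.θ (ue e) / 2) := by
        rw [neg_I_div_two_mul_exp_mul_exp_sub_one, ← Real.cos_pi_div_two_sub]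
        ring_nf

theorem sum_sin_mul_exp_neg_ang_half {e : ℂ × ℂ} (he : e ∈ Γ.D) :
    ∑ h ∈ (Γ.incoming e.2).erase e,
        (Real.sin (Γ.θ (ue h) / 2) : ℂ) * exp ((-(ang e (rev h) / 2) : ℝ) * I) =
      Real.cos (Γ.θ (ue e) / 2) := by
  have h := congrArg (starRingEnd ℂ) (sum_sin_mul_exp_ang_half he)
  simp only [map_sum, map_mul, Complex.conj_ofReal, ← Complex.exp_conj, Complex.conj_I] at h
  rw [← h]
  refine Finset.sum_congr rfl fun g _ => ?_
  congr 2
  push_cast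
  ring

theorem Sproj_one_apply (e : ℂ × ℂ) :
    Sproj Γ (fun _ => 1) e = Real.sin (Γ.θ (ue e) / 2) * ((1 + (unitDir e)⁻¹) / 2) := by
  rw [Sproj, projL_one (norm_dirL e), dirL_sq]

theorem sin_θ_half_ne_zero {e : ℂ × ℂ} (he : e ∈ Γ.D) : Real.sin (Γ.θ (ue e) / 2) ≠ 0 :=
  (Real.sin_pos_of_pos_of_lt_pi (by linarith [Γ.θpos e he])
    (by linarith [Γ.θlt e he, Real.pi_pos])).ne'

/-- `S1` can vanish on an edge `e` only if `e` points in the negative real direction, in which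
case it does not vanish on the reversed edge. -/
theorem exists_Sproj_one_ne_zero (hne : Γ.D.Nonempty) :
    ∃ e ∈ Γ.D, Sproj Γ (fun _ => 1) e ≠ 0 := by
  obtain ⟨e, he⟩ := hne
  by_contra! h
  have h₁ := h e he
  have h₂ := h (rev e) (Γ.symm e he)
  simp only [Sproj_one_apply, ue_rev, unitDir_rev (sub_ne_zero_of_mem he), mul_eq_zero,
    Complex.ofReal_eq_zero, sin_θ_half_ne_zero he, false_or, div_eq_zero_iff, two_ne_zero,
    or_false, inv_neg] at h₁ h₂
  have : (2 : ℂ) = 0 := by linear_combination h₁ + h₂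
  norm_num at this

theorem KWop_of_not_mem {x : Sym2 ℂ → ℝ} {φ : ℂ × ℂ → ℂ} {e : ℂ × ℂ} (he : e ∉ Γ.D) :
    KWop Γ x φ e = φ e := by
  simp [KWop, he]

theorem KWop_of_mem {x : Sym2 ℂ → ℝ} {φ : ℂ × ℂ → ℂ} {e : ℂ × ℂ} (he : e ∈ Γ.D) :
    KWop Γ x φ e = φ e - x (ue e) *
      ∑ h ∈ (Γ.incoming e.2).erase e, exp (I * ang e (rev h) / 2) * φ (rev h) := by
  rw [KWop, if_pos he, Finset.mul_sum, ← Finset.sum_filter, Finset.filter_ne', incoming,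
    ← rev_rev e, ← Finset.image_erase rev_injective, rev_rev,
    Finset.sum_image fun a _ b _ h => rev_injective h]
  simp only [rev_rev, mul_assoc]

theorem KWop_zero_apply (x : Sym2 ℂ → ℝ) (e : ℂ × ℂ) : KWop Γ x 0 e = 0 := by
  simp [KWop]

theorem KWop_congr {x : Sym2 ℂ → ℝ} {φ ψ : ℂ × ℂ → ℂ} (h : Set.EqOn φ ψ Γ.D) {e : ℂ × ℂ}
    (he : e ∈ Γ.D) : KWop Γ x φ e = KWop Γ x ψ e := by
  rw [KWop_of_mem he, KWop_of_mem he, h he]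
  congr 2
  refine Finset.sum_congr rfl fun g hg => ?_
  rw [h (Γ.symm g (mem_incoming.1 (Finset.mem_of_mem_erase hg)).1)]

theorem KWop_critX_Sproj_one {e : ℂ × ℂ} (he : e ∈ Γ.D) :
    KWop Γ (critX Γ) (Sproj Γ fun _ => 1) e = 0 := by
  have hterm : ∀ h ∈ (Γ.incoming e.2).erase e,
      exp (I * ang e (rev h) / 2) * Sproj Γ (fun _ => 1) (rev h) =
        ((Real.sin (Γ.θ (ue h) / 2) : ℂ) * exp ((ang e (rev h) / 2 : ℝ) * I) + (unitDir e)⁻¹ *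
          ((Real.sin (Γ.θ (ue h) / 2) : ℂ) * exp ((-(ang e (rev h) / 2) : ℝ) * I))) / 2 := by
    intro h hh
    have hD := (mem_incoming.1 (Finset.mem_of_mem_erase hh)).1
    have hu : unitDir (rev h) = exp ((ang e (rev h) / 2 : ℝ) * I) ^ 2 * unitDir e := by
      rw [← Complex.exp_nat_mul, show ((2 : ℕ) : ℂ) * ((ang e (rev h) / 2 : ℝ) * I) =
        ang e (rev h) * I by push_cast; ring,
        exp_ang_mul_I (sub_ne_zero_of_mem he) (rev_sub_ne_zero_of_mem hD),
        div_mul_cancel₀ _ (unitDir_ne_zero e)]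
    rw [Sproj_one_apply, ue_rev, hu, Complex.ofReal_neg, neg_mul, Complex.exp_neg,
      show I * (ang e (rev h) : ℂ) / 2 = ((ang e (rev h) / 2 : ℝ) : ℂ) * I by push_cast; ring]
    field_simp [unitDir_ne_zero, Complex.exp_ne_zero]
  have hcos : (Real.cos (Γ.θ (ue e) / 2) : ℂ) ≠ 0 := Complex.ofReal_ne_zero.2
    (Real.cos_pos_of_mem_Ioo ⟨by linarith [Γ.θpos e he, Real.pi_pos],
      by linarith [Γ.θlt e he]⟩).ne'
  rw [KWop_of_mem he, Finset.sum_congr rfl hterm, ← Finset.sum_div, Finset.sum_add_distrib,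
    ← Finset.mul_sum, sum_sin_mul_exp_ang_half he, sum_sin_mul_exp_neg_ang_half he,
    Sproj_one_apply, critX, Real.tan_eq_sin_div_cos, Complex.ofReal_div]
  field_simp
  ring

end Isoradial

/-- on the full isoradial graph with critical weights, the constant
function `1` satisfies `T(S1) = 0` on all edges of the graph; hence the critical
Kac-Ward operator has a nontrivial kernel and is not invertible on `ℂ^{directed edges}`. -/
theorem critical_KW_has_nontrivial_kernel
    (Γ : Isoradial) (hne : Γ.D.Nonempty) :
    (∀ e ∈ Γ.D, KWop Γ (critX Γ) (Sproj Γ fun _ => 1) e = 0) ∧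
    (∃ φ : (ℂ × ℂ) → ℂ, φ ≠ 0 ∧ ∀ e : ℂ × ℂ, KWop Γ (critX Γ) φ e = 0) ∧
    ¬ Function.Injective (fun φ : (ℂ × ℂ) → ℂ => KWop Γ (critX Γ) φ) := by
  have hker : ∀ e, KWop Γ (critX Γ) (Γ.D.indicator (Sproj Γ fun _ => 1)) e = 0 := fun e => by
    by_cases he : e ∈ Γ.D
    · rw [Isoradial.KWop_congr Set.eqOn_indicator he, Isoradial.KWop_critX_Sproj_one he]
    · rw [Isoradial.KWop_of_not_mem he, Set.indicator_of_notMem he]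
  have hne_zero : Γ.D.indicator (Sproj Γ fun _ => 1) ≠ 0 := fun h0 => by
    obtain ⟨e, he, hSe⟩ := Isoradial.exists_Sproj_one_ne_zero hne
    exact hSe (by simpa [Set.indicator_of_mem he] using congrFun h0 e)
  refine ⟨fun e he => Isoradial.KWop_critX_Sproj_one he, ⟨_, hne_zero, hker⟩, fun hinj => ?_⟩
  exact hne_zero (hinj (funext fun e => (hker e).trans (Isoradial.KWop_zero_apply _ e).symm))
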